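/- Let n, N, m be positive integers with n + 1 ≤ N, and let Δ ∈ ℝ^m be such that for every positive integer k there exists an index i with Int.fract(k·Δ_i/(2N)) ∈ [0, n/N]. Suppose the group R = {a ∈ ℤ^m : a_1·Δ_1 + … + a_m·Δ_m ∈ 2N·ℤ} is generated by a single vector, i.e., R = ℤ·a₀ for some a₀ ∈ ℤ^m with at least one strictly positive component. Then the numbers Δ_1, …, Δ_m are pairwise distinct modulo 2N: for all i ≠ j, Δ_i − Δ_j ∉ 2N·ℤ. -/

import Mathlib

/-!
If `Δ i ≡ Δ j (mod 2N)`, then `e_i - e_j` is a nonzero multiple of `a₀`, so every resonance of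
`θ = Δ / (2N)` has coordinate sum zero. This forces the orbit `k • θ` to come close to the
diagonal of the torus: some `k > 0` has every `fract (k * θ l)` in `(γ, 1)`, `γ = n / N`,
contradicting `h`.

To find `k`, average `∏ l, havercos (k * θ l - β) ^ p`, with `β = (1 + γ) / 2`, over `k`. This is a
trigonometric polynomial in `k • θ` with nonnegative coefficients; its Cesàro mean keeps exactly
the resonant frequencies, whose phases `𝐞 (-β * ∑ l, a l)` equal `1`, so the mean is at least the
constant coefficient `(choose (2p) p / 4^p)^m ≥ (2p+1)^(-m)`. If every `k` had a coordinate with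
`fract ≤ γ`, each term would be at most `havercos ((1 - γ) / 2) ^ p`, which is smaller for large `p`.
-/

open Finset Real
open scoped FourierTransform

lemma coe_fourierChar_sum {ι : Type*} (s : Finset ι) (f : ι → ℝ) :
    (𝐞 (∑ i ∈ s, f i) : ℂ) = ∏ i ∈ s, (𝐞 (f i) : ℂ) := by
  classical
  induction s using Finset.induction_on with
  | empty => simp
  | insert a s ha ih =>
    rw [sum_insert ha, prod_insert ha, AddChar.map_add_eq_mul, Circle.coe_mul, ih]

lemma fourierChar_eq_one_iff {x : ℝ} : 𝐞 x = 1 ↔ ∃ z : ℤ, x = z := by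
  rw [Real.fourierChar_apply', Circle.exp_eq_one]
  refine exists_congr fun z => ?_
  rw [mul_comm (z : ℝ), mul_right_inj' (by positivity)]

noncomputable def havercos (x : ℝ) : ℝ := (1 + cos (2 * π * x)) / 2

lemma havercos_nonneg (x : ℝ) : 0 ≤ havercos x := by
  have := neg_one_le_cos (2 * π * x)
  unfold havercos; linarith

lemma havercos_le_one (x : ℝ) : havercos x ≤ 1 := by
  have := cos_le_one (2 * π * x)
  unfold havercos; linarith

lemma havercos_lt_one {x : ℝ} (h0 : 0 < x) (h1 : x < 1) : havercos x < 1 := by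
  have hne : cos (2 * π * x) ≠ 1 := by
    rw [Ne, cos_eq_one_iff]
    rintro ⟨n, hn⟩
    have : (n : ℝ) = x := by nlinarith [pi_pos]
    have h0' : (0 : ℝ) < n := this ▸ h0
    have h1' : (n : ℝ) < 1 := this ▸ h1
    norm_cast at h0' h1'
    omega
  have := (cos_le_one (2 * π * x)).lt_of_ne hne
  unfold havercos; linarith

lemma ofReal_havercos_mul (x : ℝ) : (havercos x : ℂ) * (4 * 𝐞 x) = (1 + 𝐞 x) ^ 2 := by
  have hinv : (𝐞 x : ℂ) * (𝐞 (-x) : ℂ) = 1 := by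
    rw [← Circle.coe_mul, ← AddChar.map_add_eq_mul, add_neg_cancel, AddChar.map_zero_eq_one,
      Circle.coe_one]
  have hcos : (2 * cos (2 * π * x) : ℂ) = 𝐞 x + 𝐞 (-x) := by
    rw [Real.fourierChar_apply, Real.fourierChar_apply, Complex.ofReal_cos, Complex.cos]
    push_cast; ring_nf
  unfold havercos
  push_cast
  push_cast at hcos
  linear_combination (𝐞 x : ℂ) * hcos + hinv

lemma ofReal_havercos_pow (p : ℕ) (x : ℝ) :
    ((havercos x ^ p : ℝ) : ℂ) =
      ∑ j ∈ range (2 * p + 1), (((2 * p).choose j / 4 ^ p : ℝ) : ℂ) * 𝐞 ((j - p) * x) := by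
  set u : ℂ := (𝐞 x : ℂ)
  have hu : u ≠ 0 := Circle.coe_ne_zero _
  have hterm : ∀ j : ℕ, (𝐞 ((j - p) * x) : ℂ) = u ^ j / u ^ p := fun j => by
    rw [sub_mul, AddChar.map_sub_eq_div, ← nsmul_eq_mul, ← nsmul_eq_mul,
      AddChar.map_nsmul_eq_pow, AddChar.map_nsmul_eq_pow, Circle.coe_div, Circle.coe_pow,
      Circle.coe_pow]
  have hhav : (havercos x : ℂ) = (1 + u) ^ 2 / (4 * u) := by
    rw [eq_div_iff (by simpa using hu)]; exact ofReal_havercos_mul x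
  simp_rw [hterm]
  rw [Complex.ofReal_pow, hhav, div_pow, ← pow_mul, add_comm, add_pow, sum_div]
  refine sum_congr rfl fun j _ => ?_
  push_cast
  rw [mul_pow]
  field_simp
  ring

lemma havercos_sub_le_of_fract_le {γ y : ℝ} (hγ : γ < 1) (hy : Int.fract y ≤ γ) :
    havercos (y - (1 + γ) / 2) ≤ havercos ((1 - γ) / 2) := by
  have hy0 := Int.fract_nonneg y
  have hperiod : cos (2 * π * (y - (1 + γ) / 2)) = cos (2 * π * ((1 + γ) / 2 - Int.fract y)) := by
    rw [← cos_neg, ← cos_add_int_mul_two_pi _ (⌊y⌋)]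
    congr 1
    rw [← Int.self_sub_fract y]
    ring
  unfold havercos
  rw [hperiod]
  gcongr
  rcases le_total ((1 + γ) / 2 - Int.fract y) (1 / 2) with h | h
  · exact cos_le_cos_of_nonneg_of_le_pi (by nlinarith [pi_pos]) (by nlinarith [pi_pos])
      (by nlinarith [pi_pos])
  · rw [← cos_two_pi_sub (2 * π * ((1 + γ) / 2 - Int.fract y))]
    exact cos_le_cos_of_nonneg_of_le_pi (by nlinarith [pi_pos]) (by nlinarith [pi_pos])
      (by nlinarith [pi_pos])

lemma ofReal_prod_havercos_pow_mul_sub {ι : Type*} [Fintype ι] [DecidableEq ι]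
    (p k : ℕ) (θ : ι → ℝ) (β : ℝ) :
    ((∏ l, havercos (k * θ l - β) ^ p : ℝ) : ℂ) =
      ∑ J ∈ Fintype.piFinset fun _ : ι => range (2 * p + 1),
        ((∏ l, (2 * p).choose (J l) / 4 ^ p : ℝ) : ℂ) * 𝐞 (-(β * ∑ l, ((J l : ℝ) - p)))
          * (𝐞 (∑ l, ((J l : ℝ) - p) * θ l) : ℂ) ^ k := by
  push_cast [← Complex.ofReal_pow]
  simp_rw [ofReal_havercos_pow, prod_univ_sum, prod_mul_distrib, ← coe_fourierChar_sum]
  refine sum_congr rfl fun J _ => ?_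
  have harg : ∑ l, ((J l : ℝ) - p) * (k * θ l - β)
      = -(β * ∑ l, ((J l : ℝ) - p)) + k • ∑ l, ((J l : ℝ) - p) * θ l := by
    simp only [nsmul_eq_mul, mul_sum, ← sum_neg_distrib, ← sum_add_distrib]
    exact sum_congr rfl fun l _ => by ring
  push_cast
  rw [harg, AddChar.map_add_eq_mul, AddChar.map_nsmul_eq_pow, Circle.coe_mul, Circle.coe_pow,
    mul_assoc]

lemma prod_havercos_sub_pow_le {ι : Type*} [Fintype ι] {γ : ℝ} (hγ : γ < 1) (y : ι → ℝ) {l₀ : ι}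
    (hl₀ : Int.fract (y l₀) ≤ γ) (p : ℕ) :
    ∏ l, havercos (y l - (1 + γ) / 2) ^ p ≤ havercos ((1 - γ) / 2) ^ p := by
  classical
  rw [prod_pow]
  refine pow_le_pow_left₀ (prod_nonneg fun l _ => havercos_nonneg _) ?_ p
  calc ∏ l, havercos (y l - (1 + γ) / 2)
      = havercos (y l₀ - (1 + γ) / 2) * ∏ l ∈ univ.erase l₀, havercos (y l - (1 + γ) / 2) :=
        (mul_prod_erase _ _ (mem_univ l₀)).symm
    _ ≤ havercos ((1 - γ) / 2) * 1 :=
        mul_le_mul (havercos_sub_le_of_fract_le hγ hl₀)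
          (prod_le_one (fun l _ => havercos_nonneg _) fun l _ => havercos_le_one _)
          (prod_nonneg fun l _ => havercos_nonneg _) (havercos_nonneg _)
    _ = havercos ((1 - γ) / 2) := mul_one _

lemma one_le_two_mul_add_one_mul_choose_div_four_pow (p : ℕ) :
    1 ≤ (2 * p + 1 : ℝ) * ((2 * p).choose p / 4 ^ p) := by
  rw [← mul_div_assoc, one_le_div (by positivity)]
  exact_mod_cast Nat.four_pow_le_two_mul_add_one_mul_central_binom p

lemma norm_sum_range_pow_succ_le {𝕜 : Type*} [NormedField 𝕜] {c : 𝕜} (hc : ‖c‖ ≤ 1) (h1 : c ≠ 1)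
    (K : ℕ) : ‖∑ k ∈ range K, c ^ (k + 1)‖ ≤ 2 / ‖1 - c‖ := by
  have hsum : ∑ k ∈ range K, c ^ (k + 1) = c * ((c ^ K - 1) / (c - 1)) := by
    rw [← geom_sum_eq h1 K, mul_sum]
    exact sum_congr rfl fun k _ => pow_succ' c k
  have hK : ‖c ^ K - 1‖ ≤ 2 := calc
    ‖c ^ K - 1‖ ≤ ‖c ^ K‖ + ‖(1 : 𝕜)‖ := norm_sub_le _ _
    _ ≤ 1 + 1 := by rw [norm_pow, norm_one]; gcongr; exact pow_le_one₀ (norm_nonneg c) hc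
    _ = 2 := by norm_num
  rw [hsum, norm_mul, norm_div, ← norm_neg (c - 1), neg_sub]
  have : 0 < ‖1 - c‖ := norm_pos_iff.2 (sub_ne_zero.2 h1.symm)
  calc ‖c‖ * (‖c ^ K - 1‖ / ‖1 - c‖) ≤ 1 * (2 / ‖1 - c‖) := by gcongr
    _ = 2 / ‖1 - c‖ := one_mul _

lemma exists_norm_sum_range_sum_sub_le {ι 𝕜 : Type*} [NormedField 𝕜] [DecidableEq 𝕜]
    (s : Finset ι) (w z : ι → 𝕜) (hz : ∀ i, ‖z i‖ ≤ 1) :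
    ∃ C, ∀ K : ℕ, ‖∑ k ∈ range K, ∑ i ∈ s, w i * z i ^ (k + 1)
      - K * ∑ i ∈ s with z i = 1, w i‖ ≤ C := by
  refine ⟨∑ i ∈ s with z i ≠ 1, ‖w i‖ * (2 / ‖1 - z i‖), fun K => ?_⟩
  have hres : ∑ i ∈ s with z i = 1, ∑ k ∈ range K, w i * z i ^ (k + 1)
      = K * ∑ i ∈ s with z i = 1, w i := by
    rw [mul_sum]
    refine sum_congr rfl fun i hi => ?_
    simp [(mem_filter.1 hi).2, mul_comm]
  rw [sum_comm, ← sum_filter_add_sum_filter_not s (fun i => z i = 1), hres, add_sub_cancel_left]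
  refine (norm_sum_le _ _).trans (sum_le_sum fun i hi => ?_)
  rw [← mul_sum, norm_mul]
  exact mul_le_mul_of_nonneg_left
    (norm_sum_range_pow_succ_le (hz i) (mem_filter.1 hi).2 K) (norm_nonneg _)

lemma le_of_forall_nat_mul_le_add {α : Type*} [Field α] [LinearOrder α] [IsStrictOrderedRing α]
    [Archimedean α] {a b C : α} (h : ∀ K : ℕ, K * a ≤ K * b + C) : a ≤ b := by
  by_contra! hba
  obtain ⟨K, hK⟩ := exists_nat_gt (C / (a - b))
  have := h K
  rw [div_lt_iff₀ (sub_pos.2 hba)] at hK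
  nlinarith

lemma exists_pow_mul_pow_lt_one (d : ℕ) {q : ℝ} (hq0 : 0 ≤ q) (hq1 : q < 1) :
    ∃ p : ℕ, (2 * p + 1 : ℝ) ^ d * q ^ p < 1 := by
  have hlim : Filter.Tendsto (fun p : ℕ => 3 ^ d * ((p : ℝ) ^ d * q ^ p)) Filter.atTop (nhds 0) := by
    simpa using (tendsto_pow_const_mul_const_pow_of_lt_one d hq0 hq1).const_mul (3 ^ d)
  obtain ⟨p, hp, hp1⟩ :=
    ((hlim.eventually (gt_mem_nhds one_pos)).and (Filter.eventually_ge_atTop 1)).exists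
  refine ⟨p, lt_of_le_of_lt ?_ hp⟩
  have : (2 * p + 1 : ℝ) ≤ 3 * p := by
    have : (1 : ℝ) ≤ p := by exact_mod_cast hp1
    linarith
  calc (2 * p + 1 : ℝ) ^ d * q ^ p ≤ (3 * p) ^ d * q ^ p := by gcongr
    _ = 3 ^ d * ((p : ℝ) ^ d * q ^ p) := by ring

lemma re_sum_filter_eq_one_le {ι : Type*} (s : Finset ι) (w z : ι → ℂ) (hz : ∀ i, ‖z i‖ ≤ 1)
    {f : ℕ → ℝ} (hf : ∀ k, (f k : ℂ) = ∑ i ∈ s, w i * z i ^ (k + 1)) {B : ℝ}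
    (hB : ∀ k, f k ≤ B) : (∑ i ∈ s with z i = 1, w i).re ≤ B := by
  obtain ⟨C, hC⟩ := exists_norm_sum_range_sum_sub_le s w z hz
  refine le_of_forall_nat_mul_le_add (C := C) fun K => ?_
  have hsum : ∑ k ∈ range K, f k ≤ K * B := by
    simpa using sum_le_sum fun k (_ : k ∈ range K) => hB k
  have hnorm := (Complex.re_le_norm _).trans ((norm_sub_rev _ _).trans_le (hC K))
  simp_rw [← hf, ← Complex.ofReal_sum] at hnorm
  simp only [Complex.sub_re, Complex.ofReal_re, Complex.mul_re,
    Complex.natCast_re, Complex.natCast_im, zero_mul, sub_zero] at hnorm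
  linarith

theorem exists_forall_lt_fract_of_resonance_sum_eq_zero {ι : Type*} [Fintype ι] (θ : ι → ℝ)
    {γ : ℝ} (hγ0 : 0 ≤ γ) (hγ1 : γ < 1)
    (hres : ∀ a : ι → ℤ, (∃ z : ℤ, ∑ l, (a l : ℝ) * θ l = z) → ∑ l, a l = 0) :
    ∃ k : ℕ, 0 < k ∧ ∀ l, γ < Int.fract (k * θ l) := by
  classical
  by_contra! hbad
  set β := (1 + γ) / 2
  set q := havercos ((1 - γ) / 2)
  obtain ⟨p, hp⟩ := exists_pow_mul_pow_lt_one (Fintype.card ι) (havercos_nonneg _)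
    (havercos_lt_one (by linarith) (by linarith) : q < 1)
  set b : ℕ → ℝ := fun j => (2 * p).choose j / 4 ^ p
  have hb0 : ∀ j, 0 ≤ b j := fun j => div_nonneg (Nat.cast_nonneg _) (pow_nonneg (by norm_num) _)
  set P := Fintype.piFinset fun _ : ι => range (2 * p + 1)
  set α : (ι → ℕ) → ℝ := fun J => ∑ l, ((J l : ℝ) - p) * θ l
  set w : (ι → ℕ) → ℂ := fun J => ((∏ l, b (J l) : ℝ) : ℂ) * 𝐞 (-(β * ∑ l, ((J l : ℝ) - p)))
  set f : ℕ → ℝ := fun k => ∏ l, havercos (((k + 1 : ℕ) : ℝ) * θ l - β) ^ p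
  have hf : ∀ k, (f k : ℂ) = ∑ J ∈ P, w J * (𝐞 (α J) : ℂ) ^ (k + 1) := fun k =>
    ofReal_prod_havercos_pow_mul_sub p (k + 1) θ β
  have hfq : ∀ k, f k ≤ q ^ p := fun k => by
    obtain ⟨l₀, hl₀⟩ := hbad (k + 1) k.succ_pos
    exact prod_havercos_sub_pow_le hγ1 (fun l => ((k + 1 : ℕ) : ℝ) * θ l) hl₀ p
  have hmean := re_sum_filter_eq_one_le P w (fun J => 𝐞 (α J)) (fun J => (Circle.norm_coe _).le)
    hf hfq
  have hresonant : ∀ J, (𝐞 (α J) : ℂ) = 1 → w J = ((∏ l, b (J l) : ℝ) : ℂ) := by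
    intro J hJ
    obtain ⟨z, hz⟩ := fourierChar_eq_one_iff.1 (Circle.coe_eq_one.1 hJ)
    have hsum := hres (fun l => (J l : ℤ) - p) ⟨z, by push_cast; exact hz⟩
    have : ∑ l, ((J l : ℝ) - p) = 0 := by exact_mod_cast hsum
    simp only [w, this, mul_zero, neg_zero, AddChar.map_zero_eq_one, Circle.coe_one, mul_one]
  have hcentral : b p ^ Fintype.card ι ≤ (∑ J ∈ P with (𝐞 (α J) : ℂ) = 1, w J).re := by
    rw [sum_congr rfl fun J hJ => hresonant J (mem_filter.1 hJ).2, ← Complex.ofReal_sum,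
      Complex.ofReal_re]
    have hmem : (fun _ => p) ∈ P.filter fun J => (𝐞 (α J) : ℂ) = 1 :=
      mem_filter.2 ⟨Fintype.mem_piFinset.2 fun _ => mem_range.2 (by omega), by simp [α]⟩
    have hle := single_le_sum (f := fun J : ι → ℕ => ∏ l, b (J l))
      (fun J _ => prod_nonneg fun l _ => hb0 (J l)) hmem
    rwa [prod_const, card_univ] at hle
  have hone : 1 ≤ (2 * p + 1 : ℝ) ^ Fintype.card ι * q ^ p := calc
    1 ≤ ((2 * p + 1) * b p) ^ Fintype.card ι :=
      one_le_pow₀ (one_le_two_mul_add_one_mul_choose_div_four_pow p)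
    _ = (2 * p + 1) ^ Fintype.card ι * b p ^ Fintype.card ι := mul_pow _ _ _
    _ ≤ (2 * p + 1) ^ Fintype.card ι * q ^ p := by gcongr; exact hcentral.trans hmean
  linarith

theorem stmt_3_general (n N m : ℕ) (hN : n + 1 ≤ N)
    (Δ : Fin m → ℝ)
    (h : ∀ k : ℕ, 0 < k →
      ∃ i : Fin m, Int.fract ((k : ℝ) * Δ i / (2 * N)) ∈ Set.Icc 0 ((n : ℝ) / N))
    (a₀ : Fin m → ℤ)
    (hR : {a : Fin m → ℤ | ∃ z : ℤ, ∑ i, (a i : ℝ) * Δ i = 2 * N * z}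
        = {a : Fin m → ℤ | ∃ c : ℤ, a = c • a₀}) :
    ∀ i j : Fin m, i ≠ j → ¬ ∃ z : ℤ, Δ i - Δ j = 2 * N * z := by
  rintro i j hij ⟨z, hz⟩
  have hN0 : (0 : ℝ) < N := by exact_mod_cast (show 0 < N by omega)
  have hmul : ∀ a : Fin m → ℤ, (∃ z : ℤ, ∑ l, (a l : ℝ) * Δ l = 2 * N * z) →
      ∃ c : ℤ, a = c • a₀ := fun a ha => (Set.ext_iff.1 hR a).1 ha
  obtain ⟨c, hc⟩ := hmul (Pi.single i 1 - Pi.single j 1)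
    ⟨z, by simp [Pi.single_apply, sub_mul, sum_sub_distrib, hz]⟩
  have hc0 : c ≠ 0 := by
    rintro rfl
    simpa [hij] using congr_fun hc i
  have hsum₀ : ∑ l, a₀ l = 0 := by
    have := congr_arg (fun a : Fin m → ℤ => ∑ l, a l) hc
    simpa [sum_sub_distrib, ← mul_sum, hc0] using this
  obtain ⟨k, hk, hlt⟩ := exists_forall_lt_fract_of_resonance_sum_eq_zero (fun l => Δ l / (2 * N))
    (γ := n / N) (by positivity) ((div_lt_one hN0).2 (by exact_mod_cast hN)) fun a ⟨z, hz⟩ => by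
      obtain ⟨c, rfl⟩ := hmul a ⟨z, by rw [← hz, mul_sum]; field_simp⟩
      simp [← mul_sum, hsum₀]
  obtain ⟨l, -, hl⟩ := h k hk
  exact (hlt l).not_ge (by rwa [mul_div_assoc'])

/-- If the group of resonances of `Δ` modulo `2N` has rank one (generated by a
single vector with a strictly positive component), then the mean indices
`Δ_1, …, Δ_m` are pairwise distinct modulo `2N`. -/
theorem stmt_3 (n N m : ℕ) (hn : 0 < n) (hN : n + 1 ≤ N) (hm : 0 < m)
    (Δ : Fin m → ℝ)
    (h : ∀ k : ℕ, 0 < k →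
      ∃ i : Fin m, Int.fract ((k : ℝ) * Δ i / (2 * N)) ∈ Set.Icc 0 ((n : ℝ) / N))
    (a₀ : Fin m → ℤ)
    (hR : {a : Fin m → ℤ | ∃ z : ℤ, ∑ i, (a i : ℝ) * Δ i = 2 * N * z}
        = {a : Fin m → ℤ | ∃ c : ℤ, a = c • a₀})
    (hpos : ∃ i, 0 < a₀ i) :
    ∀ i j : Fin m, i ≠ j → ¬ ∃ z : ℤ, Δ i - Δ j = 2 * N * z :=
  stmt_3_general n N m hN Δ h a₀ hR
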